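/- arXiv:math/0202184 — 3 statements merged into one kernel-verified Lean document; each statement's English description precedes it below -/
import Mathlib

section
/- For every nonzero ℏ ∈ ℂ and every n ≥ 1, the module V^ℏ(n) is an indecomposable A-module. -/
/-- A subspace invariant under the two operators `X`, `Y` (i.e. a submodule for
the module structure they define). -/
def AInvariant {V : Type} [AddCommGroup V] [Module ℂ V] (X Y : Module.End ℂ V)
    (p : Submodule ℂ V) : Prop :=
  ∀ v ∈ p, X v ∈ p ∧ Y v ∈ p

/-- A module (given by a vector space with two operators `X`, `Y`) is
indecomposable if it is nonzero and is not the internal direct sum of two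
nonzero invariant subspaces. -/
def AIndecomposable {V : Type} [AddCommGroup V] [Module ℂ V]
    (X Y : Module.End ℂ V) : Prop :=
  (∃ v : V, v ≠ 0) ∧ ∀ p q : Submodule ℂ V, AInvariant X Y p → AInvariant X Y q →
    IsCompl p q → p = ⊥ ∨ q = ⊥

/-- An isomorphism of modules given by pairs of endomorphisms: a linear
equivalence intertwining the respective actions. -/
def AModIso {V W : Type} [AddCommGroup V] [Module ℂ V] [AddCommGroup W] [Module ℂ W]
    (X Y : Module.End ℂ V) (X' Y' : Module.End ℂ W) : Prop :=
  ∃ e : V ≃ₗ[ℂ] W, (∀ v, e (X v) = X' (e v)) ∧ (∀ v, e (Y v) = Y' (e v))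

/-- The `n × n` Jordan block `J_n(ℏ)` with eigenvalue `ℏ`. -/
def jordan (n : ℕ) (ℏ : ℂ) : Matrix (Fin n) (Fin n) ℂ :=
  Matrix.of fun i j : Fin n =>
    if i = j then ℏ else if (j : ℕ) = (i : ℕ) + 1 then 1 else 0

/-- The action of `X` on the module `V^ℏ(n) = ℂⁿ ⊕ ℂⁿ`:
`X(u,v) = (J_n(ℏ)v, 0)`. -/
noncomputable def VhX (n : ℕ) (ℏ : ℂ) : Module.End ℂ ((Fin n → ℂ) × (Fin n → ℂ)) :=
  LinearMap.prod
    ((Matrix.toLin' (jordan n ℏ)).comp (LinearMap.snd ℂ (Fin n → ℂ) (Fin n → ℂ)))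
    (0 : ((Fin n → ℂ) × (Fin n → ℂ)) →ₗ[ℂ] (Fin n → ℂ))

/-- The action of `Y` on the module `V^ℏ(n) = ℂⁿ ⊕ ℂⁿ`: `Y(u,v) = (0, u)`. -/
noncomputable def VhY (n : ℕ) : Module.End ℂ ((Fin n → ℂ) × (Fin n → ℂ)) :=
  LinearMap.prod (0 : ((Fin n → ℂ) × (Fin n → ℂ)) →ₗ[ℂ] (Fin n → ℂ))
    (LinearMap.fst ℂ (Fin n → ℂ) (Fin n → ℂ))

/-! Since `Y² = 0`, every nonzero submodule meets `ker Y = 0 ⊕ ℂⁿ`, on which `YX` acts as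
`J_n(ℏ)`. A nonzero `J_n(ℏ)`-invariant subspace contains an eigenvector, and the eigenvectors of a
Jordan block are the multiples of `e₀`. So every nonzero submodule contains `(0, e₀)`, and no two
of them are complementary. -/

open Matrix Polynomial

section Jordan

variable {n : ℕ} {ℏ : ℂ}

lemma jordan_apply (i j : Fin n) :
    jordan n ℏ i j = (if i = j then ℏ else 0) + if (j : ℕ) = i + 1 then 1 else 0 := by
  by_cases h : i = j <;> simp [jordan, h]

lemma jordan_mulVec_apply (v : Fin n → ℂ) (i : Fin n) :
    (jordan n ℏ *ᵥ v) i = ℏ * v i + if h : (i : ℕ) + 1 < n then v ⟨i + 1, h⟩ else 0 := by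
  simp only [mulVec, dotProduct, jordan_apply, add_mul, ite_mul, one_mul, zero_mul,
    Finset.sum_add_distrib, Finset.sum_ite_eq, Finset.mem_univ, if_true]
  congr 1
  split_ifs with h
  · rw [Finset.sum_eq_single_of_mem (⟨i + 1, h⟩ : Fin n) (Finset.mem_univ _)]
    · simp
    · intro j _ hj
      exact if_neg fun hj' => hj (Fin.ext hj')
  · exact Finset.sum_eq_zero fun j _ => if_neg (by omega)

lemma jordan_isUpperTriangular : (jordan n ℏ).IsUpperTriangular := by
  intro i j hij
  have : (j : ℕ) < i := hij
  simp [jordan, (show i ≠ j from hij.ne'), show (j : ℕ) ≠ i + 1 by omega]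

lemma jordan_charpoly : (jordan n ℏ).charpoly = (X - C ℏ) ^ n := by
  rw [charpoly_of_isUpperTriangular _ jordan_isUpperTriangular]
  simp [jordan]

lemma eq_of_hasEigenvalue_jordan {μ : ℂ}
    (h : Module.End.HasEigenvalue (toLin' (jordan n ℏ)) μ) : μ = ℏ := by
  rw [Module.End.hasEigenvalue_iff_isRoot_charpoly, Matrix.charpoly_toLin', jordan_charpoly] at h
  simp only [IsRoot.def, eval_pow, eval_sub, eval_X, eval_C] at h
  exact sub_eq_zero.mp (eq_zero_of_pow_eq_zero h)

lemma eq_smul_single_zero_of_jordan_mulVec_eq {v : Fin (n + 1) → ℂ}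
    (h : jordan (n + 1) ℏ *ᵥ v = ℏ • v) : v = v 0 • Pi.single 0 1 := by
  ext i
  induction i using Fin.cases with
  | zero => simp
  | succ j =>
    have hj := congrFun h j.castSucc
    rw [jordan_mulVec_apply, dif_pos (by simp)] at hj
    simpa [Fin.succ_ne_zero, Fin.succ, Fin.castSucc] using hj

lemma single_zero_mem_of_jordan_invariant {W : Submodule ℂ (Fin (n + 1) → ℂ)}
    (hW : ∀ v ∈ W, jordan (n + 1) ℏ *ᵥ v ∈ W) (hne : W ≠ ⊥) : Pi.single 0 1 ∈ W := by
  have := Submodule.nontrivial_iff_ne_bot.mpr hne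
  obtain ⟨μ, hμ⟩ :=
    Module.End.exists_eigenvalue (LinearMap.restrict (toLin' (jordan (n + 1) ℏ)) hW)
  obtain ⟨w, hw⟩ := hμ.exists_hasEigenvector
  have hv : jordan (n + 1) ℏ *ᵥ (w : Fin (n + 1) → ℂ) = μ • w :=
    congrArg Subtype.val hw.apply_eq_smul
  have hw0 : (w : Fin (n + 1) → ℂ) ≠ 0 := by simpa using hw.2
  rw [eq_of_hasEigenvalue_jordan (Module.End.hasEigenvalue_of_hasEigenvector
    ⟨Module.End.mem_eigenspace_iff.mpr hv, hw0⟩)] at hv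
  have hw' := eq_smul_single_zero_of_jordan_mulVec_eq hv
  have h0 : (w : Fin (n + 1) → ℂ) 0 ≠ 0 := fun h => hw0 (by rw [hw', h, zero_smul])
  rw [← Submodule.smul_mem_iff W h0, ← hw']
  exact w.2

end Jordan

section Vh

variable {n : ℕ} {ℏ : ℂ}

lemma comap_inr_ne_bot {p : Submodule ℂ ((Fin n → ℂ) × (Fin n → ℂ))}
    (hY : ∀ w ∈ p, VhY n w ∈ p) (hne : p ≠ ⊥) :
    p.comap (LinearMap.inr ℂ _ _) ≠ ⊥ := by
  obtain ⟨w, hw, hw0⟩ := Submodule.exists_mem_ne_zero_of_ne_bot hne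
  rw [Submodule.ne_bot_iff]
  by_cases h1 : w.1 = 0
  · refine ⟨w.2, ?_, fun h2 => hw0 (Prod.ext h1 h2)⟩
    simpa [← h1] using hw
  · exact ⟨w.1, hY w hw, h1⟩

lemma jordan_mulVec_mem_comap_inr {p : Submodule ℂ ((Fin n → ℂ) × (Fin n → ℂ))}
    (hp : AInvariant (VhX n ℏ) (VhY n) p) {v : Fin n → ℂ}
    (hv : v ∈ p.comap (LinearMap.inr ℂ _ _)) : jordan n ℏ *ᵥ v ∈ p.comap (LinearMap.inr ℂ _ _) :=
  -- `Y (X (0, v)) = (0, J v)`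
  (hp _ (hp _ hv).1).2

lemma inr_single_zero_mem {p : Submodule ℂ ((Fin (n + 1) → ℂ) × (Fin (n + 1) → ℂ))}
    (hp : AInvariant (VhX (n + 1) ℏ) (VhY (n + 1)) p) (hne : p ≠ ⊥) : (0, Pi.single 0 1) ∈ p :=
  single_zero_mem_of_jordan_invariant (fun _ => jordan_mulVec_mem_comap_inr hp)
    (comap_inr_ne_bot (fun w hw => (hp w hw).2) hne)

end Vh

theorem Vh_indecomposable_general (ℏ : ℂ) (n : ℕ) (hn : 1 ≤ n) :
    AIndecomposable (VhX n ℏ) (VhY n) := by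
  obtain ⟨m, rfl⟩ : ∃ m, n = m + 1 := ⟨n - 1, by omega⟩
  have he : ((0, Pi.single 0 1) : (Fin (m + 1) → ℂ) × (Fin (m + 1) → ℂ)) ≠ 0 := by simp
  refine ⟨⟨_, he⟩, fun p q hp hq hpq => ?_⟩
  by_contra! h
  exact he (Submodule.disjoint_def.mp hpq.disjoint _ (inr_single_zero_mem hp h.1)
    (inr_single_zero_mem hq h.2))

/-- For every nonzero `ℏ ∈ ℂ` and every `n ≥ 1`, the module `V^ℏ(n)` is an
indecomposable `A`-module, where `A = ℂ⟨x,y⟩/(x², y²)` is the ungraded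
universal enveloping algebra of `sl(1|1)`. -/
theorem Vh_indecomposable (ℏ : ℂ) (hℏ : ℏ ≠ 0) (n : ℕ) (hn : 1 ≤ n) :
    AIndecomposable (VhX n ℏ) (VhY n) :=
  Vh_indecomposable_general ℏ n hn
end

section
/- For nonzero ℏ, ℏ′ ∈ ℂ and n, n′ ≥ 1, the A-modules V^ℏ(n) and V^{ℏ′}(n′) are isomorphic if and only if ℏ = ℏ′ and n = n′. -/
section aux

lemma jordan_zero_pow (n k : ℕ) (i j : Fin n) :
    ((jordan n 0) ^ k) i j = if (j : ℕ) = (i : ℕ) + k then 1 else 0 := by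
  induction k generalizing j with
  | zero => simp [Matrix.one_apply, Fin.ext_iff, eq_comm]
  | succ k ih =>
    rw [pow_succ, Matrix.mul_apply]
    by_cases h : (i : ℕ) + k < n
    · rw [Finset.sum_eq_single (⟨(i : ℕ) + k, h⟩ : Fin n)]
      · rw [ih]
        simp only [jordan, Matrix.of_apply, Fin.ext_iff]
        split_ifs
        all_goals first | rfl | (exfalso; omega) | simp_all
      · intro b _ hb
        rw [ih, if_neg (by simpa [Fin.ext_iff] using hb), zero_mul]
      · simp
    · rw [Finset.sum_eq_zero fun l _ => by rw [ih, if_neg (by omega), zero_mul]]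
      rw [if_neg (by omega)]

lemma jordan_zero_pow_self (n : ℕ) : (jordan n 0) ^ n = 0 := by
  ext i j
  rw [jordan_zero_pow, if_neg (by omega)]
  rfl

lemma jordan_sub (n : ℕ) (ℏ : ℂ) : jordan n 0 = jordan n ℏ - ℏ • (1 : Matrix (Fin n) (Fin n) ℂ) := by
  ext i j
  simp only [jordan, Matrix.sub_apply, Matrix.smul_apply, Matrix.one_apply, Matrix.of_apply,
    smul_eq_mul]
  split_ifs
  all_goals first | ring1 | (exfalso; omega) | simp_all

lemma toLin'_pow (n k : ℕ) (A : Matrix (Fin n) (Fin n) ℂ) :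
    (Matrix.toLin' A) ^ k = Matrix.toLin' (A ^ k) := by
  induction k with
  | zero => rw [pow_zero, pow_zero, Matrix.toLin'_one]; rfl
  | succ k ih => rw [pow_succ, pow_succ, Matrix.toLin'_mul, ih, Module.End.mul_eq_comp]

lemma XY_single (n : ℕ) (ℏ : ℂ) (hn : 0 < n) :
    (VhX n ℏ) ((VhY n) ((Pi.single (⟨0, hn⟩ : Fin n) 1 : Fin n → ℂ), (0 : Fin n → ℂ))) =
      ℏ • ((Pi.single (⟨0, hn⟩ : Fin n) 1 : Fin n → ℂ), (0 : Fin n → ℂ)) := by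
  simp only [VhX, VhY, LinearMap.prod_apply, Pi.prod, LinearMap.coe_comp, Function.comp_apply,
    LinearMap.snd_apply, LinearMap.fst_apply, LinearMap.zero_apply, Matrix.toLin'_apply,
    Prod.smul_mk, smul_zero]
  refine Prod.ext ?_ rfl
  ext i
  simp only [Matrix.mulVec_single, jordan, Matrix.of_apply, Pi.smul_apply, Pi.single_apply,
    Fin.ext_iff, smul_eq_mul]
  split_ifs
  all_goals first | ring1 | (exfalso; omega) | simp_all

end aux

/-- For nonzero `ℏ, ℏ′ ∈ ℂ` and `n, n′ ≥ 1`, the `A`-modules `V^ℏ(n)` and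
`V^{ℏ′}(n′)` are isomorphic if and only if `ℏ = ℏ′` and `n = n′`. -/
theorem Vh_iso_iff (ℏ ℏ' : ℂ) (hℏ : ℏ ≠ 0) (hℏ' : ℏ' ≠ 0)
    (n n' : ℕ) (hn : 1 ≤ n) (hn' : 1 ≤ n') :
    AModIso (VhX n ℏ) (VhY n) (VhX n' ℏ') (VhY n') ↔ ℏ = ℏ' ∧ n = n' := by
  constructor
  · rintro ⟨e, hX, hY⟩
    have hnn : n = n' := by
      have h := e.finrank_eq
      simp only [Module.finrank_prod, Module.finrank_pi, Fintype.card_fin] at h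
      omega
    refine ⟨?_, hnn⟩
    -- the distinguished vector
    set v0 : (Fin n → ℂ) × (Fin n → ℂ) :=
      ((Pi.single (⟨0, hn⟩ : Fin n) 1 : Fin n → ℂ), (0 : Fin n → ℂ)) with hv0def
    have hv0 : v0 ≠ 0 := by
      intro h
      have := congrFun (congrArg Prod.fst h) ⟨0, hn⟩
      simp [hv0def] at this
    set w := e v0 with hwdef
    have hw : (VhX n' ℏ') ((VhY n') w) = ℏ • w := by
      rw [hwdef, ← hY, ← hX, XY_single n ℏ hn, map_smul]
    have hw1 : Matrix.toLin' (jordan n' ℏ') w.1 = ℏ • w.1 := by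
      have := congrArg Prod.fst hw
      simpa [VhX, VhY] using this
    have hw2 : w.2 = 0 := by
      have := congrArg Prod.snd hw
      simp only [VhX, VhY, LinearMap.prod_apply, Pi.prod, LinearMap.zero_apply,
        Prod.smul_snd] at this
      have h0 : ℏ • w.2 = 0 := this.symm
      rcases smul_eq_zero.mp h0 with h | h
      · exact absurd h hℏ
      · exact h
    have hw1ne : w.1 ≠ 0 := by
      intro h
      apply hv0
      apply e.injective
      rw [← hwdef] at *
      have : w = 0 := Prod.ext h hw2
      simpa [this] using (map_zero e).symm
    -- the nilpotent part
    set M : Module.End ℂ (Fin n' → ℂ) := Matrix.toLin' (jordan n' 0) with hMdef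
    have hM : M w.1 = (ℏ - ℏ') • w.1 := by
      rw [hMdef, jordan_sub n' ℏ', map_sub, map_smul, Matrix.toLin'_one,
        LinearMap.sub_apply, LinearMap.smul_apply, LinearMap.id_apply, hw1, sub_smul]
    have hMk : ∀ k, (M ^ k) w.1 = (ℏ - ℏ') ^ k • w.1 := by
      intro k
      induction k with
      | zero => simp
      | succ k ih =>
        rw [pow_succ, Module.End.mul_apply, hM, map_smul, ih, smul_smul, ← pow_succ']
    have hM0 : M ^ n' = 0 := by
      rw [hMdef, toLin'_pow, jordan_zero_pow_self, map_zero]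
    have := hMk n'
    rw [hM0] at this
    simp only [LinearMap.zero_apply] at this
    have hpow : (ℏ - ℏ') ^ n' = 0 := by
      rcases smul_eq_zero.mp this.symm with h | h
      · exact h
      · exact absurd h hw1ne
    have : ℏ - ℏ' = 0 := pow_eq_zero_iff (by omega) |>.mp hpow
    exact sub_eq_zero.mp this
  · rintro ⟨rfl, rfl⟩
    exact ⟨LinearEquiv.refl ℂ _, fun v => rfl, fun v => rfl⟩
end

section
/- Let ℏ be a nonzero complex number and let V be a finite-dimensional indecomposable A-module such that the operator E − ℏ·id_V is nilpotent, where E = XY + YX. Then dim V = 2n for some n ≥ 1 and V is isomorphic to V^ℏ(n). (Lemma 1.4: up to the change of parity, all indecomposable representations with central character concentrated at ℏ ≠ 0 are the V^ℏ(n).) -/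
/-!
`E = XY + YX` commutes with `X` and `Y`, and it is invertible because `E - ℏ` is nilpotent and
`ℏ ≠ 0`. Every vector is `w = XY(E⁻¹w) + YX(E⁻¹w)`, and `(a, b) ↦ a + Y b` is an
isomorphism `ker X × ker X ≅ V` under which `X` acts by `(a, b) ↦ (E b, 0)` and `Y` by
`(a, b) ↦ (0, a)`. Invariant splittings of `(ker X, E)` double to splittings of `V`, so `E` is
indecomposable on `ker X` with single eigenvalue `ℏ`, hence a single Jordan block: if `n` is the
nilpotency class of `N = E - ℏ` and `φ (N^(n-1) v) ≠ 0`, the Jordan chain `N^(n-1) v, …, v` spans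
an invariant subspace with invariant complement `{w | φ (N^i w) = 0 for i < n}`, since the
pairing between the two is an upper triangular matrix with diagonal `φ (N^(n-1) v)`.
-/

open LinearMap Function

theorem IsNilpotent.isUnit_of_sub_smul_one {k A : Type*} [Field k] [Ring A] [Algebra k A]
    {a : A} {c : k} (hc : c ≠ 0) (h : IsNilpotent (a - c • 1)) : IsUnit a := by
  have hu : IsUnit (c • 1 : A) := by
    rw [← Algebra.algebraMap_eq_smul_one]; exact (IsUnit.mk0 c hc).map _
  simpa using h.isUnit_add_left_of_commute hu ((Commute.one_right _).smul_right c)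

theorem LinearMap.isCompl_range_ker_of_bijective_comp {R M N : Type*} [Ring R]
    [AddCommGroup M] [Module R M] [AddCommGroup N] [Module R N] {T : M →ₗ[R] N}
    {Φ : N →ₗ[R] M} (h : Bijective (Φ ∘ₗ T)) : IsCompl (range T) (ker Φ) := by
  let S := LinearEquiv.ofBijective _ h
  constructor
  · rw [Submodule.disjoint_def]
    rintro _ ⟨a, rfl⟩ (ha : Φ (T a) = 0)
    rw [h.injective (ha.trans (map_zero _).symm), map_zero]
  · rw [codisjoint_iff, eq_top_iff]
    intro w _
    refine Submodule.mem_sup.2 ⟨T (S.symm (Φ w)), ⟨_, rfl⟩, w - T (S.symm (Φ w)), ?_, by abel⟩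
    change Φ (w - T (S.symm (Φ w))) = 0
    rw [map_sub, sub_eq_zero]
    exact (S.apply_symm_apply (Φ w)).symm

def Module.End.IsIndecomposable {R M : Type*} [Semiring R] [AddCommMonoid M] [Module R M]
    (f : Module.End R M) : Prop :=
  Nontrivial M ∧ ∀ p ∈ f.invtSubmodule, ∀ q ∈ f.invtSubmodule, IsCompl p q → p = ⊥ ∨ q = ⊥

theorem Module.End.IsIndecomposable.eq_top_of_isCompl {R M : Type*} [Semiring R]
    [AddCommMonoid M] [Module R M] {f : Module.End R M} (hf : f.IsIndecomposable)
    {p q : Submodule R M} (hp : p ∈ f.invtSubmodule) (hq : q ∈ f.invtSubmodule)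
    (hpq : IsCompl p q) (hp_ne : p ≠ ⊥) : p = ⊤ :=
  eq_top_of_isCompl_bot ((hf.2 p hp q hq hpq).resolve_left hp_ne ▸ hpq)

theorem Module.End.isNilpotent_restrict_sub_smul_one {R M : Type*} [CommRing R]
    [AddCommGroup M] [Module R M] {f : Module.End R M} {p : Submodule R M} (c : R)
    (hf : Set.MapsTo f p p) (hnil : IsNilpotent (f - c • 1)) :
    IsNilpotent (f.restrict hf - c • 1) := by
  have hc : Set.MapsTo (c • 1 : Module.End R M) p p := fun _ hv ↦ p.smul_mem c hv
  rw [← LinearMap.restrict_smul_one c hc, LinearMap.restrict_sub hf hc]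
  exact Module.End.isNilpotent.restrict _ hnil

section JordanChain

variable {k W : Type*} [Field k] [AddCommGroup W] [Module k W]

/-- Indexed so that `jordanChain N v n 0 = N ^ (n - 1) v`, matching the superdiagonal of
`jordan n ℏ`. -/
def jordanChain (N : Module.End k W) (v : W) (n : ℕ) : Fin n → W :=
  fun j ↦ (N ^ (n - 1 - j)) v

variable {N : Module.End k W} {v : W} {n : ℕ}

theorem apply_jordanChain (hn : N ^ n = 0) (j : Fin n) :
    N (jordanChain N v n j) = ∑ i : Fin n, if (j : ℕ) = i + 1 then jordanChain N v n i else 0 := by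
  obtain ⟨_ | j, hj⟩ := j
  · simp [jordanChain, ← Module.End.mul_apply, ← pow_succ', Nat.sub_add_cancel hj, hn]
  · have (i : Fin n) : j + 1 = (i : ℕ) + 1 ↔ (⟨j, by omega⟩ : Fin n) = i := by simp [Fin.ext_iff]
    simp only [this, Finset.sum_ite_eq, Finset.mem_univ, if_true, jordanChain,
      ← Module.End.mul_apply, ← pow_succ']
    congr 2
    omega

theorem bijective_comp_linearCombination_jordanChain {φ : Module.Dual k W}
    (hφ : φ ((N ^ (n - 1)) v) ≠ 0) (hn : N ^ n = 0) :
    Bijective ((LinearMap.pi fun i : Fin n ↦ φ ∘ₗ N ^ (i : ℕ)) ∘ₗ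
      Fintype.linearCombination k (jordanChain N v n)) := by
  classical
  let M : Matrix (Fin n) (Fin n) k := Matrix.of fun i j ↦ φ ((N ^ (i + (n - 1 - j) : ℕ)) v)
  have hM : M.IsUpperTriangular := by
    intro i j (hij : (j : ℕ) < i)
    simp only [M, Matrix.of_apply]
    rw [pow_eq_zero_of_le (by omega) hn, LinearMap.zero_apply, map_zero]
  have hdet : IsUnit M := by
    rw [Matrix.isUnit_iff_isUnit_det, Matrix.det_of_isUpperTriangular hM, isUnit_iff_ne_zero]
    refine Finset.prod_ne_zero_iff.2 fun i _ ↦ ?_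
    simpa [M, show (i : ℕ) + (n - 1 - i) = n - 1 by omega] using hφ
  have : (LinearMap.pi fun i : Fin n ↦ φ ∘ₗ N ^ (i : ℕ)) ∘ₗ
      Fintype.linearCombination k (jordanChain N v n) = Matrix.toLin' M := by
    refine LinearMap.ext fun a ↦ funext fun i ↦ ?_
    simp [M, Fintype.linearCombination_apply, jordanChain, Matrix.mulVec, dotProduct, pow_add,
      mul_comm]
  rw [this]
  exact ⟨Matrix.mulVec_injective_iff_isUnit.2 hdet, Matrix.mulVec_surjective_iff_isUnit.2 hdet⟩

theorem ker_pi_comp_pow_mem_invtSubmodule (φ : Module.Dual k W) (hn : N ^ n = 0) :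
    ker (LinearMap.pi fun i : Fin n ↦ φ ∘ₗ N ^ (i : ℕ)) ∈ N.invtSubmodule := by
  intro w (hw : _ = 0)
  refine funext fun i ↦ ?_
  change φ ((N ^ (i : ℕ)) (N w)) = 0
  rw [← Module.End.mul_apply, ← pow_succ]
  rcases Nat.lt_or_ge (i + 1) n with hi | hi
  · exact congr_fun hw ⟨i + 1, hi⟩
  · rw [pow_eq_zero_of_le hi hn, LinearMap.zero_apply, map_zero]

theorem exists_isCompl_range_linearCombination_jordanChain (hn : N ^ n = 0)
    (hv : (N ^ (n - 1)) v ≠ 0) :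
    Function.Injective (Fintype.linearCombination k (jordanChain N v n)) ∧
      ∃ C ∈ N.invtSubmodule,
        IsCompl (range (Fintype.linearCombination k (jordanChain N v n))) C := by
  obtain ⟨φ, hφ⟩ : ∃ φ : Module.Dual k W, φ ((N ^ (n - 1)) v) ≠ 0 := by
    by_contra! h
    exact hv ((Module.forall_dual_apply_eq_zero_iff k _).1 h)
  have hbij := bijective_comp_linearCombination_jordanChain hφ hn
  rw [LinearMap.coe_comp] at hbij
  exact ⟨hbij.injective.of_comp, _, ker_pi_comp_pow_mem_invtSubmodule φ hn,
    isCompl_range_ker_of_bijective_comp hbij⟩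

end JordanChain

section Jordan

variable {W : Type*} [AddCommGroup W] [Module ℂ W]

theorem comp_linearCombination_jordanChain {N : Module.End ℂ W} {v : W} {n : ℕ} (ℏ : ℂ)
    (hn : N ^ n = 0) :
    (N + ℏ • 1) ∘ₗ Fintype.linearCombination ℂ (jordanChain N v n) =
      Fintype.linearCombination ℂ (jordanChain N v n) ∘ₗ Matrix.toLin' (jordan n ℏ) := by
  classical
  refine pi_ext' fun j ↦ LinearMap.ext_ring ?_
  simp [Fintype.linearCombination_apply, jordan, ite_smul, apply_jordanChain hn]
  rw [← Fintype.sum_ite_eq' j (fun i ↦ ℏ • jordanChain N v n i), ← Finset.sum_add_distrib]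
  refine Finset.sum_congr rfl fun i _ ↦ ?_
  split_ifs with h1 h2 <;> simp_all

theorem Module.End.IsIndecomposable.exists_linearEquiv_jordan {f : Module.End ℂ W}
    (hf : f.IsIndecomposable) {ℏ : ℂ} (hnil : IsNilpotent (f - ℏ • 1)) :
    ∃ n, 1 ≤ n ∧ ∃ e : W ≃ₗ[ℂ] (Fin n → ℂ), ∀ w, e (f w) = Matrix.toLin' (jordan n ℏ) (e w) := by
  have := hf.1
  set N := f - ℏ • 1
  set n := nilpotencyClass N
  have hn : N ^ n = 0 := pow_nilpotencyClass hnil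
  have hpos : 0 < n := pos_nilpotencyClass_iff.2 hnil
  obtain ⟨v, hv⟩ : ∃ v, (N ^ (n - 1)) v ≠ 0 := by
    by_contra! h
    exact pow_pred_nilpotencyClass hnil (LinearMap.ext h)
  set T := Fintype.linearCombination ℂ (jordanChain N v n)
  obtain ⟨hT_inj, C, hC, hcompl⟩ := exists_isCompl_range_linearCombination_jordanChain hn hv
  have hf_eq : f = N + ℏ • 1 := (sub_add_cancel f _).symm
  have hfT : f ∘ₗ T = T ∘ₗ Matrix.toLin' (jordan n ℏ) := by
    rw [hf_eq]; exact comp_linearCombination_jordanChain ℏ hn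
  have hT_inv : range T ∈ f.invtSubmodule := by
    rintro _ ⟨a, rfl⟩
    exact ⟨_, (LinearMap.congr_fun hfT a).symm⟩
  have hC_inv : C ∈ f.invtSubmodule := by
    intro w hw
    rw [Submodule.mem_comap, hf_eq, LinearMap.add_apply, LinearMap.smul_apply, Module.End.one_apply]
    exact add_mem (hC hw) (C.smul_mem ℏ hw)
  have hT_ne : range T ≠ ⊥ := (Submodule.ne_bot_iff _).2
    ⟨_, mem_range_self T (Pi.single ⟨0, hpos⟩ 1), by simpa [T, jordanChain] using hv⟩
  let e := LinearEquiv.ofBijective T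
    ⟨hT_inj, range_eq_top.1 (hf.eq_top_of_isCompl hT_inv hC_inv hcompl hT_ne)⟩
  refine ⟨n, hpos, e.symm, fun w ↦ ?_⟩
  obtain ⟨a, rfl⟩ := e.surjective w
  rw [e.symm_apply_eq, e.symm_apply_apply]
  exact LinearMap.congr_fun hfT a

end Jordan

section Double

variable {R M : Type*} [CommSemiring R] [AddCommMonoid M] [Module R M]

/-- `VhX n ℏ` is `doubleX (Matrix.toLin' (jordan n ℏ))` and `VhY n` is `doubleY`. -/
def doubleX (g : Module.End R M) : Module.End R (M × M) :=
  (g ∘ₗ snd R M M).prod 0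

def doubleY : Module.End R (M × M) :=
  (0 : M × M →ₗ[R] M).prod (fst R M M)

end Double

section AModule

variable {V W U : Type} [AddCommGroup V] [Module ℂ V] [AddCommGroup W] [Module ℂ W]
  [AddCommGroup U] [Module ℂ U]

theorem AModIso.symm {X Y : Module.End ℂ V} {X' Y' : Module.End ℂ W}
    (h : AModIso X Y X' Y') : AModIso X' Y' X Y := by
  obtain ⟨e, hX, hY⟩ := h
  exact ⟨e.symm, fun w ↦ by rw [e.symm_apply_eq, hX, e.apply_symm_apply],
    fun w ↦ by rw [e.symm_apply_eq, hY, e.apply_symm_apply]⟩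

theorem AModIso.trans {X Y : Module.End ℂ V} {X' Y' : Module.End ℂ W} {X'' Y'' : Module.End ℂ U}
    (h : AModIso X Y X' Y') (h' : AModIso X' Y' X'' Y'') : AModIso X Y X'' Y'' := by
  obtain ⟨e, hX, hY⟩ := h
  obtain ⟨e', hX', hY'⟩ := h'
  exact ⟨e.trans e', fun v ↦ by simp [hX, hX'], fun v ↦ by simp [hY, hY']⟩

theorem AModIso.finrank_eq {X Y : Module.End ℂ V} {X' Y' : Module.End ℂ W}
    (h : AModIso X Y X' Y') : Module.finrank ℂ V = Module.finrank ℂ W :=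
  h.choose.finrank_eq

theorem AIndecomposable.of_aModIso {X Y : Module.End ℂ V} {X' Y' : Module.End ℂ W}
    (h : AModIso X Y X' Y') (hind : AIndecomposable X Y) : AIndecomposable X' Y' := by
  obtain ⟨e, hX, hY⟩ := h
  obtain ⟨⟨v, hv⟩, hind⟩ := hind
  refine ⟨⟨e v, e.map_ne_zero_iff.2 hv⟩, fun p q hp hq hpq ↦ ?_⟩
  let ι := Submodule.orderIsoMapComap e.symm
  have hinv {r : Submodule ℂ W} (hr : AInvariant X' Y' r) : AInvariant X Y (ι r) := by
    intro v hv
    simp only [ι, Submodule.orderIsoMapComap_apply, Submodule.mem_map_equiv,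
      LinearEquiv.symm_symm] at hv ⊢
    exact ⟨hX v ▸ (hr _ hv).1, hY v ▸ (hr _ hv).2⟩
  simpa only [map_eq_bot_iff] using hind _ _ (hinv hp) (hinv hq) (ι.isCompl hpq)

theorem aModIso_double_of_conj {g : Module.End ℂ V} {g' : Module.End ℂ W} (e : V ≃ₗ[ℂ] W)
    (he : ∀ v, e (g v) = g' (e v)) : AModIso (doubleX g) doubleY (doubleX g') doubleY :=
  ⟨e.prodCongr e, fun v ↦ by simp [doubleX, he], fun v ↦ by simp [doubleY]⟩

theorem Submodule.isCompl_prod {R M N : Type*} [Ring R] [AddCommGroup M] [Module R M]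
    [AddCommGroup N] [Module R N] {p q : Submodule R M} {p' q' : Submodule R N}
    (h : IsCompl p q) (h' : IsCompl p' q') : IsCompl (p.prod p') (q.prod q') := by
  constructor
  · rw [disjoint_iff, Submodule.prod_inf_prod, h.inf_eq_bot, h'.inf_eq_bot, Submodule.prod_bot]
  · rw [codisjoint_iff, Submodule.prod_sup_prod, h.sup_eq_top, h'.sup_eq_top, Submodule.prod_top]

theorem isIndecomposable_of_aIndecomposable_double {g : Module.End ℂ V}
    (h : AIndecomposable (doubleX g) doubleY) : g.IsIndecomposable := by
  obtain ⟨⟨⟨a, b⟩, hab⟩, hind⟩ := h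
  refine ⟨?_, fun p hp q hq hpq ↦ ?_⟩
  · by_cases ha : a = 0
    · exact ⟨⟨b, 0, by simp_all⟩⟩
    · exact ⟨⟨a, 0, ha⟩⟩
  have hinv {r : Submodule ℂ V} (hr : r ∈ g.invtSubmodule) :
      AInvariant (doubleX g) doubleY (r.prod r) := fun w hw ↦
    ⟨⟨hr hw.2, r.zero_mem⟩, ⟨r.zero_mem, hw.1⟩⟩
  simpa [Submodule.prod_eq_bot_iff] using
    hind _ _ (hinv hp) (hinv hq) (Submodule.isCompl_prod hpq hpq)

end AModule

section KerPair

variable {R M : Type*} [CommRing R] [AddCommGroup M] [Module R M]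

def kerPairMap (X Y : Module.End R M) : ker X × ker X →ₗ[R] M :=
  (ker X).subtype ∘ₗ fst R _ _ + Y ∘ₗ (ker X).subtype ∘ₗ snd R _ _

theorem mapsTo_ker_anticommutator {X : Module.End R M} (Y : Module.End R M) (hX : X * X = 0) :
    Set.MapsTo (X * Y + Y * X) (ker X) (ker X) := by
  intro v (hv : X v = 0)
  change X (X (Y v) + Y (X v)) = 0
  rw [hv, map_zero, add_zero, ← Module.End.mul_apply, hX, LinearMap.zero_apply]

variable {X Y : Module.End R M}

theorem anticommutator_apply_of_mem_ker {b : M} (hb : b ∈ ker X) :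
    (X * Y + Y * X) b = X (Y b) := by
  change X (Y b) + Y (X b) = _
  rw [mem_ker.1 hb, map_zero, add_zero]

theorem kerPairMap_apply (a b : ker X) : kerPairMap X Y (a, b) = a + Y b := rfl

theorem bijective_kerPairMap (hX : X * X = 0) (hE : Bijective (X * Y + Y * X)) :
    Bijective (kerPairMap X Y) := by
  constructor
  · rw [← LinearMap.ker_eq_bot, LinearMap.ker_eq_bot']
    rintro ⟨a, b⟩ h
    rw [kerPairMap_apply] at h
    have hb : b = 0 := by
      have hXh := congr_arg X h
      rw [map_add, mem_ker.1 a.2, zero_add, ← anticommutator_apply_of_mem_ker b.2, map_zero,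
        ← map_zero (X * Y + Y * X)] at hXh
      exact Submodule.coe_eq_zero.1 (hE.injective hXh)
    subst hb
    simpa using h
  · intro w
    obtain ⟨u, rfl⟩ := hE.surjective w
    have hXX (v : M) : X (X v) = 0 := by rw [← Module.End.mul_apply, hX, LinearMap.zero_apply]
    exact ⟨(⟨X (Y u), hXX _⟩, ⟨X u, hXX _⟩), rfl⟩

end KerPair

theorem aModIso_doubleX_restrict_ker {V : Type} [AddCommGroup V] [Module ℂ V]
    {X Y : Module.End ℂ V} (hX : X * X = 0) (hY : Y * Y = 0) (hE : Bijective (X * Y + Y * X))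
    (hE_ker : Set.MapsTo (X * Y + Y * X) (ker X) (ker X)) :
    AModIso X Y (doubleX ((X * Y + Y * X).restrict hE_ker)) doubleY := by
  refine AModIso.symm ⟨LinearEquiv.ofBijective _ (bijective_kerPairMap hX hE), ?_, ?_⟩
  · rintro ⟨a, b⟩
    change kerPairMap X Y ((X * Y + Y * X).restrict hE_ker b, 0) = X (kerPairMap X Y (a, b))
    rw [kerPairMap_apply, kerPairMap_apply, map_add, mem_ker.1 a.2, zero_add,
      Submodule.coe_zero, map_zero, add_zero]
    exact anticommutator_apply_of_mem_ker b.2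
  · rintro ⟨a, b⟩
    change kerPairMap X Y (0, a) = Y (kerPairMap X Y (a, b))
    rw [kerPairMap_apply, kerPairMap_apply, map_add, ← Module.End.mul_apply Y Y, hY]
    simp

theorem indecomposable_with_central_character_general (ℏ : ℂ) (hℏ : ℏ ≠ 0)
    (V : Type) [AddCommGroup V] [Module ℂ V]
    (X Y : Module.End ℂ V) (hX : X * X = 0) (hY : Y * Y = 0)
    (hind : AIndecomposable X Y)
    (hnil : IsNilpotent (X * Y + Y * X - ℏ • (1 : Module.End ℂ V))) :
    ∃ n : ℕ, 1 ≤ n ∧ Module.finrank ℂ V = 2 * n ∧ AModIso X Y (VhX n ℏ) (VhY n) := by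
  have hE_ker := mapsTo_ker_anticommutator Y hX
  have hV := aModIso_doubleX_restrict_ker hX hY
    ((Module.End.isUnit_iff _).1 (hnil.isUnit_of_sub_smul_one hℏ)) hE_ker
  obtain ⟨n, hn, e, he⟩ := (isIndecomposable_of_aIndecomposable_double
    (hind.of_aModIso hV)).exists_linearEquiv_jordan
    (Module.End.isNilpotent_restrict_sub_smul_one ℏ hE_ker hnil)
  have hiso := hV.trans (aModIso_double_of_conj e he)
  refine ⟨n, hn, ?_, hiso⟩
  rw [hiso.finrank_eq, Module.finrank_prod, Module.finrank_fin_fun, two_mul]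

/-- Lemma 1.4 (ungraded form): let `ℏ ≠ 0` and let `V` be a finite-dimensional
indecomposable `A`-module (operators `X`, `Y` with `X² = Y² = 0`) such that
`E − ℏ·id` is nilpotent, where `E = XY + YX`. Then `dim V = 2n` for some
`n ≥ 1` and `V` is isomorphic to `V^ℏ(n)`. -/
theorem indecomposable_with_central_character (ℏ : ℂ) (hℏ : ℏ ≠ 0)
    (V : Type) [AddCommGroup V] [Module ℂ V] [FiniteDimensional ℂ V]
    (X Y : Module.End ℂ V) (hX : X * X = 0) (hY : Y * Y = 0)
    (hind : AIndecomposable X Y)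
    (hnil : IsNilpotent (X * Y + Y * X - ℏ • (1 : Module.End ℂ V))) :
    ∃ n : ℕ, 1 ≤ n ∧ Module.finrank ℂ V = 2 * n ∧ AModIso X Y (VhX n ℏ) (VhY n) :=
  indecomposable_with_central_character_general ℏ hℏ V X Y hX hY hind hnil
end
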